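/- Let B, N > 0 and u, θ ∈ C([0,T]). With G* and H the solution operators as defined, one has the polarized identity ∫₀ᵀ (u - B(B+N⁻¹)G*(H(u))) θ dt = ∫₀ᵀ (u - B·H(u))(θ - B·H(θ)) dt + N⁻¹B ∫₀ᵀ (G*(H(u)))' (G*(H(θ)))' dt + B·H(u)(T)·H(θ)(T). -/

import Mathlib

/-!
Write `c = B + N⁻¹`. Substituting `u = Hu' + c Hu - N⁻¹ c Au`, `Hu = -Au' + c Au` and the same
relations for `θ`, the integrand on the left differs from the two integrands on the right by
exactly the derivative of the flux `B Hu Hθ - B c Au Hθ`. Integrating, the flux vanishes at `0`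
because `Hθ 0 = 0`, and equals `B Hu(T) Hθ(T)` at `T` because `Au T = 0`.
-/

open Set MeasureTheory intervalIntegral

theorem intervalIntegral.integral_eq_sub_of_hasDerivWithinAt_Icc {f f' : ℝ → ℝ} {a b : ℝ}
    (hab : a ≤ b) (hf : ∀ t ∈ Icc a b, HasDerivWithinAt f (f' t) (Icc a b) t)
    (hf' : ContinuousOn f' (Icc a b)) :
    ∫ t in a..b, f' t = f b - f a :=
  integral_eq_sub_of_hasDeriv_right_of_le hab
    (fun t ht => (hf t ht).continuousWithinAt)
    (fun t ht => (hf t (Ioo_subset_Icc_self ht)).mono_of_mem_nhdsWithin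
      (Icc_mem_nhdsGT_of_mem ⟨ht.1.le, ht.2⟩))
    (hf'.intervalIntegrable_of_Icc hab)

theorem intervalIntegral.integral_eq_integral_add_sub_of_eqOn_add_deriv {f g F F' : ℝ → ℝ}
    {a b : ℝ} (hab : a ≤ b) (hF : ∀ t ∈ Icc a b, HasDerivWithinAt F (F' t) (Icc a b) t)
    (hF' : ContinuousOn F' (Icc a b)) (hg : IntervalIntegrable g volume a b)
    (hfg : EqOn f (fun t => g t + F' t) (Icc a b)) :
    ∫ t in a..b, f t = (∫ t in a..b, g t) + (F b - F a) := by
  rw [integral_congr (uIcc_of_le hab ▸ hfg), integral_add hg (hF'.intervalIntegrable_of_Icc hab),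
    integral_eq_sub_of_hasDerivWithinAt_Icc hab hF hF']

theorem energy_density_eq_add_flux_deriv {B k c u H H' A A' θ G G' E E' : ℝ} (hc : c = B + k)
    (hA : -A' + c * A = H) (hH : H' + c * H - k * c * A = u)
    (hE : -E' + c * E = G) (hG : G' + c * G - k * c * E = θ) :
    (u - B * c * A) * θ
      = (u - B * H) * (θ - B * G) + k * B * (A' * E')
        + (B * (H' * G + H * G') - B * c * (A' * G + A * G')) := by
  subst hc hA hH hE hG
  ring

theorem stmt_19_general (T B N : ℝ) (hT : 0 < T)
    (u θ Hu Hu' Au Au' Hθ Hθ' Aθ Aθ' : ℝ → ℝ)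
    (hu : ContinuousOn u (Set.Icc 0 T)) (hθ : ContinuousOn θ (Set.Icc 0 T))
    -- Hu = H(u), Au = G*(Hu)
    (hHud : ∀ t ∈ Set.Icc (0:ℝ) T, HasDerivWithinAt Hu (Hu' t) (Set.Icc 0 T) t)
    (hHuc : ContinuousOn Hu' (Set.Icc 0 T))
    (hAud : ∀ t ∈ Set.Icc (0:ℝ) T, HasDerivWithinAt Au (Au' t) (Set.Icc 0 T) t)
    (hAuc : ContinuousOn Au' (Set.Icc 0 T))
    (hAueq : ∀ t ∈ Set.Icc (0:ℝ) T, -Au' t + (B + N⁻¹) * Au t = Hu t)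
    (hAuT : Au T = 0)
    (hHueq : ∀ t ∈ Set.Icc (0:ℝ) T,
      Hu' t + (B + N⁻¹) * Hu t - N⁻¹ * (B + N⁻¹) * Au t = u t)
    (hHu0 : Hu 0 = 0)
    -- Hθ = H(θ), Aθ = G*(Hθ)
    (hHθd : ∀ t ∈ Set.Icc (0:ℝ) T, HasDerivWithinAt Hθ (Hθ' t) (Set.Icc 0 T) t)
    (hHθc : ContinuousOn Hθ' (Set.Icc 0 T))
    (hAθc : ContinuousOn Aθ' (Set.Icc 0 T))
    (hAθeq : ∀ t ∈ Set.Icc (0:ℝ) T, -Aθ' t + (B + N⁻¹) * Aθ t = Hθ t)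
    (hHθeq : ∀ t ∈ Set.Icc (0:ℝ) T,
      Hθ' t + (B + N⁻¹) * Hθ t - N⁻¹ * (B + N⁻¹) * Aθ t = θ t)
    (hHθ0 : Hθ 0 = 0) :
    ∫ t in (0:ℝ)..T, (u t - B * (B + N⁻¹) * Au t) * θ t
      = (∫ t in (0:ℝ)..T, (u t - B * Hu t) * (θ t - B * Hθ t))
        + N⁻¹ * B * (∫ t in (0:ℝ)..T, Au' t * Aθ' t)
        + B * Hu T * Hθ T := by
  set c := B + N⁻¹
  have hHuC : ContinuousOn Hu (Icc 0 T) := fun t ht => (hHud t ht).continuousWithinAt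
  have hAuC : ContinuousOn Au (Icc 0 T) := fun t ht => (hAud t ht).continuousWithinAt
  have hHθC : ContinuousOn Hθ (Icc 0 T) := fun t ht => (hHθd t ht).continuousWithinAt
  have hI₁ : IntervalIntegrable (fun t => (u t - B * Hu t) * (θ t - B * Hθ t)) volume 0 T :=
    ((hu.sub (continuousOn_const.mul hHuC)).mul
      (hθ.sub (continuousOn_const.mul hHθC))).intervalIntegrable_of_Icc hT.le
  have hI₂ : IntervalIntegrable (fun t => N⁻¹ * B * (Au' t * Aθ' t)) volume 0 T :=
    (continuousOn_const.mul (hAuc.mul hAθc)).intervalIntegrable_of_Icc hT.le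
  rw [integral_eq_integral_add_sub_of_eqOn_add_deriv (F := fun t => B * (Hu t * Hθ t)
      - B * c * (Au t * Hθ t)) hT.le
      (fun t ht => (((hHud t ht).mul (hHθd t ht)).const_mul B).sub
        (((hAud t ht).mul (hHθd t ht)).const_mul (B * c)))
      ((continuousOn_const.mul ((hHuc.mul hHθC).add (hHuC.mul hHθc))).sub
        (continuousOn_const.mul ((hAuc.mul hHθC).add (hAuC.mul hHθc))))
      (hI₁.add hI₂) fun t ht => energy_density_eq_add_flux_deriv rfl (hAueq t ht) (hHueq t ht)
        (hAθeq t ht) (hHθeq t ht),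
    integral_add hI₁ hI₂, intervalIntegral.integral_const_mul, hAuT, hHu0, hHθ0]
  ring

/-- polarized energy identity. With `Hu = H(u)`, `Au = G*(H(u))`
and `Hθ = H(θ)`, `Aθ = G*(H(θ))`, one has
`∫₀ᵀ (u - B(B+N⁻¹)Au) θ = ∫₀ᵀ (u - B·Hu)(θ - B·Hθ) + N⁻¹B ∫₀ᵀ Au' Aθ'
  + B·Hu(T)·Hθ(T)`. -/
theorem stmt_19 (T B N : ℝ) (hT : 0 < T) (hB : 0 < B) (hN : 0 < N)
    (u θ Hu Hu' Au Au' Hθ Hθ' Aθ Aθ' : ℝ → ℝ)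
    (hu : ContinuousOn u (Set.Icc 0 T)) (hθ : ContinuousOn θ (Set.Icc 0 T))
    -- Hu = H(u), Au = G*(Hu)
    (hHud : ∀ t ∈ Set.Icc (0:ℝ) T, HasDerivWithinAt Hu (Hu' t) (Set.Icc 0 T) t)
    (hHuc : ContinuousOn Hu' (Set.Icc 0 T))
    (hAud : ∀ t ∈ Set.Icc (0:ℝ) T, HasDerivWithinAt Au (Au' t) (Set.Icc 0 T) t)
    (hAuc : ContinuousOn Au' (Set.Icc 0 T))
    (hAueq : ∀ t ∈ Set.Icc (0:ℝ) T, -Au' t + (B + N⁻¹) * Au t = Hu t)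
    (hAuT : Au T = 0)
    (hHueq : ∀ t ∈ Set.Icc (0:ℝ) T,
      Hu' t + (B + N⁻¹) * Hu t - N⁻¹ * (B + N⁻¹) * Au t = u t)
    (hHu0 : Hu 0 = 0)
    -- Hθ = H(θ), Aθ = G*(Hθ)
    (hHθd : ∀ t ∈ Set.Icc (0:ℝ) T, HasDerivWithinAt Hθ (Hθ' t) (Set.Icc 0 T) t)
    (hHθc : ContinuousOn Hθ' (Set.Icc 0 T))
    (hAθd : ∀ t ∈ Set.Icc (0:ℝ) T, HasDerivWithinAt Aθ (Aθ' t) (Set.Icc 0 T) t)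
    (hAθc : ContinuousOn Aθ' (Set.Icc 0 T))
    (hAθeq : ∀ t ∈ Set.Icc (0:ℝ) T, -Aθ' t + (B + N⁻¹) * Aθ t = Hθ t)
    (hAθT : Aθ T = 0)
    (hHθeq : ∀ t ∈ Set.Icc (0:ℝ) T,
      Hθ' t + (B + N⁻¹) * Hθ t - N⁻¹ * (B + N⁻¹) * Aθ t = θ t)
    (hHθ0 : Hθ 0 = 0) :
    ∫ t in (0:ℝ)..T, (u t - B * (B + N⁻¹) * Au t) * θ t
      = (∫ t in (0:ℝ)..T, (u t - B * Hu t) * (θ t - B * Hθ t))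
        + N⁻¹ * B * (∫ t in (0:ℝ)..T, Au' t * Aθ' t)
        + B * Hu T * Hθ T :=
  stmt_19_general T B N hT u θ Hu Hu' Au Au' Hθ Hθ' Aθ Aθ' hu hθ hHud hHuc hAud hAuc hAueq hAuT
    hHueq hHu0 hHθd hHθc hAθc hAθeq hHθeq hHθ0
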